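/- arXiv:0708.4284 — 5 statements merged into one kernel-verified Lean document; each statement's English description precedes it below -/
import Mathlib

section
/- Let V be a finite vertex set, let k be a positive integer, and let C be a spanning subgraph of a graph G on V such that κ(x,y;C) ≥ min{κ(x,y;G), k} for all vertices x, y ∈ V. Then for all vertices x, y ∈ V and every set S ⊆ V \ {x,y} of fewer than k vertices, if x and y lie in different connected components of C − S, then x and y lie in different connected components of G − S. -/
/-- The local vertex-connectivity `κ(x,y;G)`: the maximum number of pairwise
internally vertex-disjoint paths between `x` and `y` in `G`. -/
noncomputable def localVertexConn {V : Type*} (G : SimpleGraph V) (x y : V) : ℕ :=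
  sSup {n : ℕ | ∃ P : Fin n → G.Path x y, Function.Injective P ∧
    Pairwise fun i j => ∀ v, v ∈ (P i).1.support → v ∈ (P j).1.support → v = x ∨ v = y}

/-!
If `G - S` joins `x` and `y` but `C - S` does not, some edge `ab` of `G - S` leaves the
component of `x` in `C - S`. Then `ab ∉ C` and `S` separates `a` from `b` in `C`, so
`κ(a,b;C) ≤ |S| < k`, while adding the edge `ab` gives `κ(a,b;C) < κ(a,b;G)`. Both contradict
`κ(a,b;C) ≥ min{κ(a,b;G), k}`.
-/

open Function

namespace SimpleGraph

variable {V : Type*} {G H : SimpleGraph V}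

def IsInternallyDisjoint {x y : V} {n : ℕ} (P : Fin n → G.Path x y) : Prop :=
  Pairwise fun i j => ∀ v ∈ (P i).1.support, v ∈ (P j).1.support → v = x ∨ v = y

variable (G) in
def internallyDisjointPathCounts (x y : V) : Set ℕ :=
  {n | ∃ P : Fin n → G.Path x y, Injective P ∧ IsInternallyDisjoint P}

lemma localVertexConn_eq_sSup (x y : V) :
    localVertexConn G x y = sSup (G.internallyDisjointPathCounts x y) := rfl

lemma zero_mem_internallyDisjointPathCounts (x y : V) :
    0 ∈ G.internallyDisjointPathCounts x y :=
  ⟨Fin.elim0, fun i => i.elim0, fun i => i.elim0⟩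

lemma bddAbove_internallyDisjointPathCounts [Finite V] (x y : V) :
    BddAbove (G.internallyDisjointPathCounts x y) := by
  classical
  have := Fintype.ofFinite V
  refine ⟨Fintype.card (G.Path x y), ?_⟩
  rintro n ⟨P, hP, -⟩
  simpa using Fintype.card_le_of_injective P hP

lemma exists_internallyDisjoint_localVertexConn [Finite V] (x y : V) :
    ∃ P : Fin (localVertexConn G x y) → G.Path x y, Injective P ∧ IsInternallyDisjoint P := by
  rw [localVertexConn_eq_sSup]
  exact Nat.sSup_mem ⟨0, zero_mem_internallyDisjointPathCounts x y⟩
    (bddAbove_internallyDisjointPathCounts x y)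

lemma le_localVertexConn [Finite V] {x y : V} {n : ℕ} {P : Fin n → G.Path x y}
    (hP : Injective P) (hdisj : IsInternallyDisjoint P) : n ≤ localVertexConn G x y := by
  rw [localVertexConn_eq_sSup]
  exact le_csSup (bddAbove_internallyDisjointPathCounts x y) ⟨P, hP, hdisj⟩

/-- The easy direction of Menger's theorem: internally disjoint paths meet a separator in
distinct vertices. -/
lemma localVertexConn_le_card {x y : V} (S : Finset V) (hx : x ∉ S) (hy : y ∉ S)
    (hS : ∀ p : G.Walk x y, ∃ v ∈ p.support, v ∈ S) :
    localVertexConn G x y ≤ S.card := by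
  rw [localVertexConn_eq_sSup]
  refine csSup_le ⟨0, zero_mem_internallyDisjointPathCounts x y⟩ ?_
  rintro n ⟨P, -, hdisj⟩
  choose f hf hfS using fun i => hS (P i).1
  have hf_inj : Injective fun i => (⟨f i, hfS i⟩ : S) := by
    intro i j hij
    have hfij : f i = f j := congrArg Subtype.val hij
    by_contra hne
    rcases hdisj hne (f i) (hf i) (hfij ▸ hf j) with h | h
    exacts [hx (h ▸ hfS i), hy (h ▸ hfS i)]
  simpa using Fintype.card_le_of_injective _ hf_inj

lemma IsInternallyDisjoint.cons {x y : V} {n : ℕ} {P : Fin n → G.Path x y}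
    (hP : IsInternallyDisjoint P) {q : G.Path x y} (hq : ∀ v ∈ q.1.support, v = x ∨ v = y) :
    IsInternallyDisjoint (Fin.cons q P : Fin (n + 1) → G.Path x y) := by
  intro i j hij v hvi hvj
  cases i using Fin.cases with
  | zero => exact hq v hvi
  | succ i =>
    cases j using Fin.cases with
    | zero => exact hq v hvj
    | succ j => exact hP (fun h => hij (congrArg Fin.succ h)) v hvi hvj

lemma IsInternallyDisjoint.mapLe (h : G ≤ H) {x y : V} {n : ℕ} {P : Fin n → G.Path x y}
    (hP : IsInternallyDisjoint P) :
    IsInternallyDisjoint fun i => (⟨(P i).1.mapLe h, (P i).2.mapLe h⟩ : H.Path x y) := by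
  intro i j hij v
  simpa only [Walk.support_mapLe_eq_support] using hP hij v

/-- An edge of `H` missing from `G ≤ H` is one more path, internally disjoint from all others. -/
lemma localVertexConn_lt_of_le [Finite V] (h : G ≤ H) {a b : V} (hH : H.Adj a b)
    (hG : ¬ G.Adj a b) : localVertexConn G a b < localVertexConn H a b := by
  obtain ⟨P, hP, hdisj⟩ := G.exists_internallyDisjoint_localVertexConn a b
  let Q : Fin _ → H.Path a b := fun i => ⟨(P i).1.mapLe h, (P i).2.mapLe h⟩
  have hQ : Injective Q := fun i j hij =>
    hP (Path.map_injective injective_id a b hij)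
  have hedge : Path.singleton hH ∉ Set.range Q := by
    rintro ⟨i, hi⟩
    have : s(a, b) ∈ (Q i).1.edges := by simp [hi]
    exact hG ((P i).1.adj_of_mem_edges (by simpa [Q] using this))
  refine Nat.lt_of_succ_le (le_localVertexConn (Fin.cons_injective_iff.2 ⟨hedge, hQ⟩)
    ((hdisj.mapLe h).cons ?_))
  simp

lemma Reachable.exists_adj_not_reachable {G' : SimpleGraph V} {x y : V} (hG : G.Reachable x y)
    (hG' : ¬ G'.Reachable x y) : ∃ a b, G.Adj a b ∧ ¬ G'.Reachable a b := by
  obtain ⟨p⟩ := hG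
  obtain ⟨d, -, hd, hd'⟩ := p.exists_boundary_dart {v | G'.Reachable x v} .rfl hG'
  exact ⟨d.fst, d.snd, d.adj, fun h => hd' (Reachable.trans hd h)⟩

lemma exists_mem_support_notMem_of_not_reachable_induce {s : Set V} {a b : s}
    (hab : ¬ (G.induce s).Reachable a b) (p : G.Walk a b) : ∃ v ∈ p.support, v ∉ s := by
  by_contra! hp
  exact hab ⟨p.induce s hp⟩

end SimpleGraph

open SimpleGraph in
theorem stmt_0_general {V : Type*} [Fintype V] (k : ℕ)
    (G C : SimpleGraph V) (hCG : C ≤ G)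
    (hκ : ∀ x y : V, min (localVertexConn G x y) k ≤ localVertexConn C x y)
    (x y : V) (S : Finset V) (hx : x ∈ ((S : Set V))ᶜ) (hy : y ∈ ((S : Set V))ᶜ)
    (hS : S.card < k)
    (hsep : ¬ (C.induce ((S : Set V)ᶜ)).Reachable ⟨x, hx⟩ ⟨y, hy⟩) :
    ¬ (G.induce ((S : Set V)ᶜ)).Reachable ⟨x, hx⟩ ⟨y, hy⟩ := by
  intro hreach
  obtain ⟨a, b, hGab, hCab⟩ := hreach.exists_adj_not_reachable hsep
  have hC : ¬ C.Adj a b := fun h => hCab (induce_adj.2 h).reachable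
  have h_le_card : localVertexConn C a b ≤ S.card :=
    localVertexConn_le_card S a.2 b.2 fun p => by
      simpa using exists_mem_support_notMem_of_not_reachable_induce hCab p
  have h_lt := localVertexConn_lt_of_le hCG (induce_adj.1 hGab) hC
  have h_min := hκ a b
  omega

/-- If `C` is a spanning subgraph of `G` with `κ(x,y;C) ≥ min{κ(x,y;G), k}` for all
vertices `x, y`, then for all `x, y` and every set `S ⊆ V \ {x,y}` of fewer than `k`
vertices, if `x` and `y` lie in different connected components of `C − S`, then they lie
in different connected components of `G − S`. -/
theorem stmt_0 {V : Type*} [Fintype V] (k : ℕ) (hk : 0 < k)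
    (G C : SimpleGraph V) (hCG : C ≤ G)
    (hκ : ∀ x y : V, min (localVertexConn G x y) k ≤ localVertexConn C x y)
    (x y : V) (S : Finset V) (hx : x ∈ ((S : Set V))ᶜ) (hy : y ∈ ((S : Set V))ᶜ)
    (hS : S.card < k)
    (hsep : ¬ (C.induce ((S : Set V)ᶜ)).Reachable ⟨x, hx⟩ ⟨y, hy⟩) :
    ¬ (G.induce ((S : Set V)ᶜ)).Reachable ⟨x, hx⟩ ⟨y, hy⟩ :=
  stmt_0_general k G C hCG hκ x y S hx hy hS hsep
end

section
/- Let V be a finite vertex set, let k be a positive integer, and let C be a spanning subgraph of a graph G on V such that κ(x,y;C) ≥ min{κ(x,y;G), k} for all vertices x, y ∈ V. Then for every l-separator S of C with l < k, the graphs C − S and G − S have the same connected components; that is, for all vertices u, v ∈ V \ S, u and v are connected in C − S if and only if they are connected in G − S. -/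
/-- `S` is an `l`-separator of `G`: `|S| = l` and removing the vertices of `S`
(together with all incident edges) leaves a graph with more connected components
than `G`. -/
def IsSeparator {V : Type*} (G : SimpleGraph V) (S : Finset V) (l : ℕ) : Prop :=
  S.card = l ∧
    Nat.card G.ConnectedComponent <
      Nat.card (G.induce ((S : Set V)ᶜ)).ConnectedComponent

/-!
Let `a b` be adjacent in `G` but not connected in `C − S`. Then every `a`–`b` path of `C` meets
`S`, and since the paths of an internally disjoint family meet `S` in distinct vertices,
`κ(a,b;C) ≤ |S| < k`. The hypothesis on `C` then forces `κ(a,b;G) ≤ κ(a,b;C)`. But `a b` are not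
adjacent in `C`, so the edge `ab` of `G` can be added to any family of internally disjoint
`a`–`b` paths of `C`, giving `κ(a,b;G) ≥ κ(a,b;C) + 1`. Hence every edge of `G − S` joins two
vertices in the same component of `C − S`.
-/

namespace SimpleGraph

variable {V : Type*}

theorem reachable_le_of_adj_le_reachable {G H : SimpleGraph V} (h : G.Adj ≤ H.Reachable) :
    G.Reachable ≤ H.Reachable := by
  rw [reachable_eq_reflTransGen] at h
  rw [reachable_eq_reflTransGen, reachable_eq_reflTransGen]
  exact Relation.reflTransGen_closed h

namespace Path

variable {G : SimpleGraph V} {x y : V}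

/-- With this relation, `localVertexConn G x y` is definitionally the largest size of an
injective family `P` of paths with `Pairwise (InternallyDisjoint on P)`. -/
def InternallyDisjoint (p q : G.Path x y) : Prop :=
  ∀ v, v ∈ p.1.support → v ∈ q.1.support → v = x ∨ v = y

theorem InternallyDisjoint.symm {p q : G.Path x y} (h : p.InternallyDisjoint q) :
    q.InternallyDisjoint p :=
  fun v hq hp => h v hp hq

theorem internallyDisjoint_singleton (h : G.Adj x y) (p : G.Path x y) :
    (Path.singleton h).InternallyDisjoint p := by
  intro v hv _
  simpa [Path.singleton] using hv

end Path

end SimpleGraph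

open SimpleGraph Function

section LocalVertexConn

variable {V : Type*} {G : SimpleGraph V} {x y : V}

theorem bddAbove_setOf_internallyDisjoint [Fintype V] (G : SimpleGraph V) (x y : V) :
    BddAbove {n : ℕ | ∃ P : Fin n → G.Path x y, Injective P ∧
      Pairwise (Path.InternallyDisjoint on P)} := by
  classical
  refine ⟨Fintype.card (G.Path x y), fun n ⟨P, hinj, _⟩ => ?_⟩
  simpa using Fintype.card_le_of_injective P hinj

theorem nonempty_setOf_internallyDisjoint (G : SimpleGraph V) (x y : V) :
    {n : ℕ | ∃ P : Fin n → G.Path x y, Injective P ∧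
      Pairwise (Path.InternallyDisjoint on P)}.Nonempty :=
  ⟨0, finZeroElim, fun i => i.elim0, fun i => i.elim0⟩

theorem le_localVertexConn [Fintype V] {n : ℕ} (P : Fin n → G.Path x y)
    (hinj : Injective P) (hdisj : Pairwise (Path.InternallyDisjoint on P)) :
    n ≤ localVertexConn G x y :=
  le_csSup (bddAbove_setOf_internallyDisjoint G x y) ⟨P, hinj, hdisj⟩

theorem exists_internallyDisjoint_localVertexConn [Fintype V] (G : SimpleGraph V) (x y : V) :
    ∃ P : Fin (localVertexConn G x y) → G.Path x y, Injective P ∧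
      Pairwise (Path.InternallyDisjoint on P) :=
  Nat.sSup_mem (nonempty_setOf_internallyDisjoint G x y)
    (bddAbove_setOf_internallyDisjoint G x y)

/-- The easy direction of Menger's theorem. -/
theorem localVertexConn_le_card (S : Finset V) (hx : x ∉ S) (hy : y ∉ S)
    (hS : ∀ p : G.Walk x y, ∃ s ∈ S, s ∈ p.support) :
    localVertexConn G x y ≤ S.card := by
  refine csSup_le (nonempty_setOf_internallyDisjoint G x y) ?_
  rintro n ⟨P, -, hdisj⟩
  choose f hfS hfP using fun i => hS (P i).1
  have hf : Injective f := by
    intro i j hij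
    by_contra hne
    rcases hdisj hne (f i) (hfP i) (hij ▸ hfP j) with h | h
    · exact hx (h ▸ hfS i)
    · exact hy (h ▸ hfS i)
  simpa using Fintype.card_le_of_injective (fun i => (⟨f i, hfS i⟩ : S))
    fun i j h => hf (congrArg Subtype.val h)

theorem localVertexConn_succ_le_of_adj [Fintype V] {C : SimpleGraph V} (hCG : C ≤ G)
    (hG : G.Adj x y) (hC : ¬ C.Adj x y) :
    localVertexConn C x y + 1 ≤ localVertexConn G x y := by
  obtain ⟨P, hinj, hdisj⟩ := exists_internallyDisjoint_localVertexConn C x y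
  let Q : Fin (localVertexConn C x y) → G.Path x y :=
    fun i => (P i).map (Hom.ofLE hCG) injective_id
  have hQ : ∀ i, (Q i).1.support = (P i).1.support := fun i => by
    simp [Q, Walk.support_map]
  refine le_localVertexConn (Fin.cons (Path.singleton hG) Q)
    (Fin.cons_injective_iff.2 ⟨?_, (Path.map_injective _ x y).comp hinj⟩) ?_
  · rintro ⟨i, hi⟩
    apply hC
    refine Walk.adj_of_length_eq_one (p := (P i).1) ?_
    simpa [Q, Path.map, Path.singleton] using congrArg (fun p : G.Path x y => p.1.length) hi
  · intro i j hij
    cases i using Fin.cases with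
    | zero =>
      cases j using Fin.cases with
      | zero => exact absurd rfl hij
      | succ j => exact Path.internallyDisjoint_singleton hG _
    | succ i =>
      cases j using Fin.cases with
      | zero => exact (Path.internallyDisjoint_singleton hG _).symm
      | succ j =>
        intro v hi hj
        simp only [Fin.cons_succ, hQ] at hi hj
        exact hdisj (fun h => hij (congrArg Fin.succ h)) v hi hj

end LocalVertexConn

theorem reachable_induce_compl_of_adj {V : Type*} [Fintype V] {G C : SimpleGraph V} {k : ℕ}
    (hCG : C ≤ G) (hκ : ∀ x y : V, min (localVertexConn G x y) k ≤ localVertexConn C x y)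
    {S : Finset V} (hS : S.card < k) {a b : ↥((S : Set V)ᶜ)} (hab : G.Adj a b) :
    (C.induce ((S : Set V)ᶜ)).Reachable a b := by
  by_contra hnr
  have hmeet : ∀ p : C.Walk a b, ∃ s ∈ S, s ∈ p.support := by
    intro p
    by_contra! h
    exact hnr ⟨p.induce _ fun v hv hvS => h v hvS hv⟩
  have hCS : localVertexConn C a b ≤ S.card := localVertexConn_le_card S a.2 b.2 hmeet
  have hCG' : localVertexConn C a b + 1 ≤ localVertexConn G a b :=
    localVertexConn_succ_le_of_adj hCG hab fun h => hnr (Adj.reachable h)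
  have := hκ a b
  omega

theorem stmt_2_general {V : Type*} [Fintype V] (k : ℕ)
    (G C : SimpleGraph V) (hCG : C ≤ G)
    (hκ : ∀ x y : V, min (localVertexConn G x y) k ≤ localVertexConn C x y)
    (S : Finset V) (l : ℕ) (hl : l < k) (hsep : IsSeparator C S l) :
    ∀ (u v : V) (hu : u ∈ ((S : Set V))ᶜ) (hv : v ∈ ((S : Set V))ᶜ),
      (C.induce ((S : Set V)ᶜ)).Reachable ⟨u, hu⟩ ⟨v, hv⟩ ↔
        (G.induce ((S : Set V)ᶜ)).Reachable ⟨u, hu⟩ ⟨v, hv⟩ := by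
  intro u v hu hv
  exact ⟨Reachable.mono fun _ _ hab => hCG hab, reachable_le_of_adj_le_reachable
    (fun _ _ hab => reachable_induce_compl_of_adj hCG hκ (hsep.1 ▸ hl) hab) _ _⟩

/-- If `C` is a spanning subgraph of `G` with `κ(x,y;C) ≥ min{κ(x,y;G), k}` for all
vertices `x, y`, then for every `l`-separator `S` of `C` with `l < k`, the graphs
`C − S` and `G − S` have the same connected components: for all `u, v ∈ V \ S`,
`u` and `v` are connected in `C − S` iff they are connected in `G − S`. -/
theorem stmt_2 {V : Type*} [Fintype V] (k : ℕ) (hk : 0 < k)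
    (G C : SimpleGraph V) (hCG : C ≤ G)
    (hκ : ∀ x y : V, min (localVertexConn G x y) k ≤ localVertexConn C x y)
    (S : Finset V) (l : ℕ) (hl : l < k) (hsep : IsSeparator C S l) :
    ∀ (u v : V) (hu : u ∈ ((S : Set V))ᶜ) (hv : v ∈ ((S : Set V))ᶜ),
      (C.induce ((S : Set V)ᶜ)).Reachable ⟨u, hu⟩ ⟨v, hv⟩ ↔
        (G.induce ((S : Set V)ᶜ)).Reachable ⟨u, hu⟩ ⟨v, hv⟩ :=
  stmt_2_general k G C hCG hκ S l hl hsep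
end

section
/- Let V be a finite vertex set, let k be a positive integer, and let C be a spanning subgraph of a graph G on V such that κ(x,y;C) ≥ min{κ(x,y;G), k} for all vertices x, y ∈ V. Then for every graph H on V, the graph G ∪ H is k-vertex connected if and only if the graph C ∪ H is k-vertex connected. -/
/-- `G` is `k`-vertex connected: the removal of any `k − 1` vertices leaves the
graph connected. -/
def IsKVertexConnected {V : Type*} (G : SimpleGraph V) (k : ℕ) : Prop :=
  ∀ S : Finset V, S.card = k - 1 → (G.induce ((S : Set V)ᶜ)).Connected

namespace SimpleGraph

variable {V W : Type*} {G C : SimpleGraph V} {x y : V}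

def Walk.InternallyDisjoint (p q : G.Walk x y) : Prop :=
  ∀ v, v ∈ p.support → v ∈ q.support → v = x ∨ v = y

lemma Walk.InternallyDisjoint.symm {p q : G.Walk x y} (h : p.InternallyDisjoint q) :
    q.InternallyDisjoint p :=
  fun v hq hp => h v hp hq

lemma Connected.of_adj_reachable {A B : SimpleGraph W} (hA : A.Connected)
    (h : ∀ a b, A.Adj a b → B.Reachable a b) : B.Connected := by
  have hle : A.Reachable ≤ B.Reachable := by
    simp only [reachable_eq_reflTransGen] at h ⊢
    exact Relation.ReflTransGen.lift' id h
  exact (connected_iff B).mpr ⟨fun a b => hle a b (hA a b), hA.nonempty⟩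

section LocalVertexConn

variable [Finite V]

lemma bddAbove_localVertexConn_set (G : SimpleGraph V) (x y : V) :
    BddAbove {n : ℕ | ∃ P : Fin n → G.Path x y, Function.Injective P ∧
      Pairwise fun i j => (P i).1.InternallyDisjoint (P j).1} := by
  classical
  have := Fintype.ofFinite V
  refine ⟨Fintype.card (G.Path x y), ?_⟩
  rintro n ⟨P, hinj, -⟩
  simpa using Fintype.card_le_of_injective P hinj

lemma card_le_localVertexConn (s : Finset (G.Path x y))
    (hs : (s : Set (G.Path x y)).Pairwise fun p q => p.1.InternallyDisjoint q.1) :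
    s.card ≤ localVertexConn G x y := by
  refine le_csSup (bddAbove_localVertexConn_set G x y)
    ⟨fun i => (s.equivFin.symm i).1, Subtype.val_injective.comp s.equivFin.symm.injective, ?_⟩
  intro i j hij
  exact hs (s.equivFin.symm i).2 (s.equivFin.symm j).2
    (fun h => hij (s.equivFin.symm.injective (Subtype.ext h)))

lemma exists_finset_card_eq_localVertexConn (G : SimpleGraph V) (x y : V) :
    ∃ s : Finset (G.Path x y),
      (s : Set (G.Path x y)).Pairwise (fun p q => p.1.InternallyDisjoint q.1) ∧
      s.card = localVertexConn G x y := by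
  classical
  have hempty : (0 : ℕ) ∈ {n : ℕ | ∃ P : Fin n → G.Path x y, Function.Injective P ∧
      Pairwise fun i j => (P i).1.InternallyDisjoint (P j).1} :=
    ⟨Fin.elim0, fun i => i.elim0, fun i => i.elim0⟩
  obtain ⟨P, hinj, hP⟩ := Nat.sSup_mem ⟨0, hempty⟩ (bddAbove_localVertexConn_set G x y)
  refine ⟨Finset.univ.image P, ?_, by rw [Finset.card_image_of_injective _ hinj]; simp; rfl⟩
  simp only [Finset.coe_image, Finset.coe_univ, Set.image_univ]
  rintro _ ⟨i, rfl⟩ _ ⟨j, rfl⟩ hij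
  exact hP fun h => hij (congrArg P h)

lemma localVertexConn_add_one_le_of_adj_of_not_adj (hCG : C ≤ G) {u v : V} (huv : G.Adj u v)
    (hC : ¬ C.Adj u v) : localVertexConn C u v + 1 ≤ localVertexConn G u v := by
  classical
  obtain ⟨s, hs, hcard⟩ := exists_finset_card_eq_localVertexConn C u v
  let f : C.Path u v → G.Path u v := Path.map (Hom.ofLE hCG) Function.injective_id
  have hf : Function.Injective f := Path.map_injective _ _ _
  let e : G.Path u v := Path.singleton huv
  have he : e ∉ s.image f := by
    simp only [Finset.mem_image, not_exists, not_and]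
    intro p _ hpe
    have : s(u, v) ∈ (f p).1.edges := hpe ▸ Path.mk'_mem_edges_singleton huv
    simp only [f, Path.map_coe, Walk.edges_map, Hom.coe_ofLE, Sym2.map_id, List.map_id] at this
    exact hC (p.1.adj_of_mem_edges this)
  rw [← hcard, ← Finset.card_image_of_injective s hf, ← Finset.card_insert_of_notMem he]
  refine card_le_localVertexConn _ ?_
  have he_disj (p : G.Path u v) : e.1.InternallyDisjoint p.1 := fun w hw _ => by simpa [e] using hw
  rw [Finset.coe_insert, Set.pairwise_insert]
  refine ⟨?_, fun p _ _ => ⟨he_disj p, (he_disj p).symm⟩⟩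
  rw [Finset.coe_image, hf.injOn.pairwise_image]
  intro p hp q hq hpq
  simpa [Function.onFun, f, Walk.InternallyDisjoint] using hs hp hq hpq

lemma exists_walk_avoiding_of_card_lt_localVertexConn {S : Finset V} {u v : V}
    (hS : S.card < localVertexConn C u v) (hu : u ∉ S) (hv : v ∉ S) :
    ∃ p : C.Walk u v, ∀ w ∈ p.support, w ∉ S := by
  obtain ⟨s, hs, hcard⟩ := exists_finset_card_eq_localVertexConn C u v
  by_contra! hmeet
  choose f hf_supp hf_S using fun p : C.Path u v => hmeet p.1
  obtain ⟨p, hp, q, hq, hpq, hfpq⟩ :=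
    Finset.exists_ne_map_eq_of_card_lt_of_maps_to (hcard ▸ hS) fun p _ => hf_S p
  rcases hs hp hq hpq (f p) (hf_supp p) (hfpq ▸ hf_supp q) with h | h
  · exact hu (h ▸ hf_S p)
  · exact hv (h ▸ hf_S p)

lemma le_localVertexConn_of_adj_of_not_adj {k : ℕ} (hCG : C ≤ G)
    (hκ : ∀ x y, min (localVertexConn G x y) k ≤ localVertexConn C x y) {u v : V}
    (huv : G.Adj u v) (hC : ¬ C.Adj u v) : k ≤ localVertexConn C u v := by
  have := localVertexConn_add_one_le_of_adj_of_not_adj hCG huv hC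
  have := hκ u v
  omega

end LocalVertexConn

end SimpleGraph

open SimpleGraph

lemma IsKVertexConnected.mono {V : Type*} {G G' : SimpleGraph V} {k : ℕ} (hle : G ≤ G')
    (hG : IsKVertexConnected G k) : IsKVertexConnected G' k :=
  fun S hS => (hG S hS).mono (comap_monotone _ hle)

lemma IsKVertexConnected.of_sup_of_localVertexConn {V : Type*} [Finite V] {G C H : SimpleGraph V}
    {k : ℕ} (hk : 0 < k) (hCG : C ≤ G)
    (hκ : ∀ x y, min (localVertexConn G x y) k ≤ localVertexConn C x y)
    (hGH : IsKVertexConnected (G ⊔ H) k) : IsKVertexConnected (C ⊔ H) k := by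
  intro S hS
  refine (hGH S hS).of_adj_reachable fun a b hab => ?_
  by_cases hCab : ((C ⊔ H).induce ((S : Set V)ᶜ)).Adj a b
  · exact hCab.reachable
  have hGab : G.Adj a b ∧ ¬ C.Adj a b := by
    simp only [comap_adj, sup_adj, not_or] at hab hCab
    tauto
  obtain ⟨p, hp⟩ := exists_walk_avoiding_of_card_lt_localVertexConn (C := C) (S := S)
    (by have := le_localVertexConn_of_adj_of_not_adj hCG hκ hGab.1 hGab.2; omega) a.2 b.2
  exact (p.induce _ hp).reachable.mono (comap_monotone _ le_sup_left)

/-- If `C` is a spanning subgraph of `G` with `κ(x,y;C) ≥ min{κ(x,y;G), k}` for all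
vertices `x, y`, then for every graph `H` on `V`, the graph `G ∪ H` is `k`-vertex
connected iff `C ∪ H` is `k`-vertex connected. -/
theorem stmt_3 {V : Type*} [Fintype V] (k : ℕ) (hk : 0 < k)
    (G C : SimpleGraph V) (hCG : C ≤ G)
    (hκ : ∀ x y : V, min (localVertexConn G x y) k ≤ localVertexConn C x y) :
    ∀ H : SimpleGraph V, IsKVertexConnected (G ⊔ H) k ↔ IsKVertexConnected (C ⊔ H) k := by
  intro H
  exact ⟨IsKVertexConnected.of_sup_of_localVertexConn hk hCG hκ,
    IsKVertexConnected.mono (sup_le_sup_right hCG H)⟩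
end

section
/- Let V be a finite vertex set, let k be a positive integer, and let C be a spanning subgraph of a graph G on V such that λ(x,y;C) ≥ min{λ(x,y;G), k} for all vertices x, y ∈ V. Then every l-cut S of C with l < k is an l-cut of G, and for every such S the graphs C − S and G − S (obtained by deleting the edges in S) have the same connected components: for all u, v ∈ V, u and v are connected in C − S if and only if they are connected in G − S. -/
/-!
Suppose an edge `xy` of `G − S` is not in `C`, yet `x` and `y` are separated in `C − S`.
Then every one of the `λ(x,y;C)` edge-disjoint `x`–`y` paths of `C` meets `S`, so
`λ(x,y;C) ≤ |S| < k`, while adding the single edge `xy` to these paths gives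
`λ(x,y;G) > λ(x,y;C)`; this contradicts `λ(x,y;C) ≥ min{λ(x,y;G), k}`. Hence every edge of
`G − S` joins two vertices that are connected in `C − S`, so `C − S` and `G − S` have the
same components, and `S` disconnects `G` because `G` has at most as many components as `C`.
-/

/-- The local edge-connectivity `λ(x,y;G)`: the maximum number of pairwise
edge-disjoint paths between `x` and `y` in `G`. -/
noncomputable def localEdgeConn {V : Type*} (G : SimpleGraph V) (x y : V) : ℕ :=
  sSup {n : ℕ | ∃ P : Fin n → G.Path x y, Function.Injective P ∧
    Pairwise fun i j => ∀ e, e ∈ (P i).1.edges → e ∉ (P j).1.edges}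

/-- `S` is an `l`-cut of `G`: `S` is a set of `l` edges of `G` whose removal leaves a
graph with more connected components than `G`. -/
def IsCut {V : Type*} (G : SimpleGraph V) (S : Finset (Sym2 V)) (l : ℕ) : Prop :=
  (S : Set (Sym2 V)) ⊆ G.edgeSet ∧ S.card = l ∧
    Nat.card G.ConnectedComponent <
      Nat.card (G.deleteEdges (S : Set (Sym2 V))).ConnectedComponent

open SimpleGraph Function

section

variable {V : Type*} {G C : SimpleGraph V} {x y : V}

def PairwiseEdgeDisjoint {ι : Type*} (P : ι → G.Path x y) : Prop :=
  Pairwise fun i j => ∀ e, e ∈ (P i).1.edges → e ∉ (P j).1.edges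

def edgeDisjointPathCounts (G : SimpleGraph V) (x y : V) : Set ℕ :=
  {n | ∃ P : Fin n → G.Path x y, Injective P ∧ PairwiseEdgeDisjoint P}

theorem bddAbove_edgeDisjointPathCounts [Finite V] (G : SimpleGraph V) (x y : V) :
    BddAbove (edgeDisjointPathCounts G x y) := by
  classical
  have := Fintype.ofFinite V
  refine ⟨Nat.card (G.Path x y), fun n ⟨P, hP, _⟩ => ?_⟩
  simpa using Nat.card_le_card_of_injective P hP

theorem le_localEdgeConn [Finite V] {n : ℕ} (P : Fin n → G.Path x y) (hinj : Injective P)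
    (hP : PairwiseEdgeDisjoint P) : n ≤ localEdgeConn G x y :=
  le_csSup (bddAbove_edgeDisjointPathCounts G x y) ⟨P, hinj, hP⟩

theorem exists_pairwiseEdgeDisjoint_localEdgeConn [Finite V] (G : SimpleGraph V) (x y : V) :
    ∃ P : Fin (localEdgeConn G x y) → G.Path x y, Injective P ∧ PairwiseEdgeDisjoint P :=
  Nat.sSup_mem (s := edgeDisjointPathCounts G x y)
    ⟨0, Fin.elim0, fun i => i.elim0, fun i => i.elim0⟩ (bddAbove_edgeDisjointPathCounts G x y)

namespace PairwiseEdgeDisjoint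

variable {ι : Type*} {P : ι → G.Path x y}

theorem injective (hxy : x ≠ y) (hP : PairwiseEdgeDisjoint P) : Injective P := by
  intro i j hij
  by_contra hne
  obtain ⟨e, he⟩ :=
    List.exists_mem_of_ne_nil _ (Walk.edges_eq_nil.not.mpr (Walk.not_nil_of_ne hxy))
  exact hP hne e he (hij ▸ he)

theorem cons {n : ℕ} {p : G.Path x y} {P : Fin n → G.Path x y} (hP : PairwiseEdgeDisjoint P)
    (hp : ∀ i, ∀ e ∈ p.1.edges, e ∉ (P i).1.edges) :
    PairwiseEdgeDisjoint (Fin.cons p P : Fin (n + 1) → G.Path x y) := by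
  intro i j hij
  cases i using Fin.cases <;> cases j using Fin.cases
  · exact absurd rfl hij
  · simpa using hp _
  · simpa using fun e he hep => hp _ e hep he
  · simpa using hP (Fin.succ_injective _ |>.ne_iff.mp hij)

theorem card_le_card [Fintype ι] {S : Finset (Sym2 V)} (hP : PairwiseEdgeDisjoint P)
    (hS : ∀ i, ∃ e ∈ S, e ∈ (P i).1.edges) : Fintype.card ι ≤ S.card := by
  choose f hfS hfP using hS
  have hf : Injective fun i => (⟨f i, hfS i⟩ : S) := by
    intro i j hij
    by_contra hne
    have hfij : f i = f j := congrArg Subtype.val hij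
    exact hP hne (f i) (hfP i) (hfij ▸ hfP j)
  simpa using Fintype.card_le_of_injective _ hf

end PairwiseEdgeDisjoint

theorem localEdgeConn_le_card_of_not_reachable [Finite V] {S : Finset (Sym2 V)}
    (h : ¬(G.deleteEdges (S : Set (Sym2 V))).Reachable x y) :
    localEdgeConn G x y ≤ S.card := by
  obtain ⟨P, -, hP⟩ := exists_pairwiseEdgeDisjoint_localEdgeConn G x y
  simpa using hP.card_le_card fun i => (P i).1.exists_mem_edges_of_not_reachable_deleteEdges h

theorem localEdgeConn_lt_of_adj_of_not_adj [Finite V] (hCG : C ≤ G) (hG : G.Adj x y)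
    (hC : ¬C.Adj x y) : localEdgeConn C x y < localEdgeConn G x y := by
  obtain ⟨P, -, hP⟩ := exists_pairwiseEdgeDisjoint_localEdgeConn C x y
  let Q : Fin (localEdgeConn C x y) → G.Path x y := fun i => ⟨_, (P i).2.mapLe hCG⟩
  have hQ : PairwiseEdgeDisjoint Q := by
    simpa [PairwiseEdgeDisjoint, Q, Walk.edges_mapLe_eq_edges] using hP
  have hsingle : ∀ i, ∀ e ∈ (Path.singleton hG).1.edges, e ∉ (Q i).1.edges := by
    simpa [Q, Walk.edges_mapLe_eq_edges] using fun i h => hC ((P i).1.adj_of_mem_edges h)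
  have hQ' := hQ.cons hsingle
  exact le_localEdgeConn _ (hQ'.injective hG.ne) hQ'

theorem reachable_deleteEdges_of_adj [Finite V] {k : ℕ} (hCG : C ≤ G)
    (hlam : ∀ x y : V, min (localEdgeConn G x y) k ≤ localEdgeConn C x y)
    {S : Finset (Sym2 V)} (hS : S.card < k) (hG : (G.deleteEdges (S : Set (Sym2 V))).Adj x y) :
    (C.deleteEdges (S : Set (Sym2 V))).Reachable x y := by
  rw [deleteEdges_adj] at hG
  by_cases hC : C.Adj x y
  · exact Adj.reachable (deleteEdges_adj.mpr ⟨hC, hG.2⟩)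
  by_contra hxy
  have hle := localEdgeConn_le_card_of_not_reachable hxy
  have hlt := localEdgeConn_lt_of_adj_of_not_adj hCG hG.1 hC
  have hmin := hlam x y
  omega

theorem SimpleGraph.Reachable.of_forall_adj {G H : SimpleGraph V} {u v : V}
    (h : ∀ ⦃x y⦄, G.Adj x y → H.Reachable x y) (huv : G.Reachable u v) :
    H.Reachable u v := by
  obtain ⟨w⟩ := huv
  induction w with
  | nil => rfl
  | cons hadj _ ih => exact (h hadj).trans ih

theorem SimpleGraph.ConnectedComponent.card_le_card_of_reachable_le [Finite V]
    {G H : SimpleGraph V} (h : G.Reachable ≤ H.Reachable) :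
    Nat.card H.ConnectedComponent ≤ Nat.card G.ConnectedComponent := by
  let f : G.ConnectedComponent → H.ConnectedComponent :=
    ConnectedComponent.lift H.connectedComponentMk fun _ _ p _ =>
      ConnectedComponent.sound (h _ _ p.reachable)
  exact Nat.card_le_card_of_surjective f fun c => c.ind fun v => ⟨G.connectedComponentMk v, rfl⟩

end

theorem stmt_5_general {V : Type*} [Fintype V] (k : ℕ)
    (G C : SimpleGraph V) (hCG : C ≤ G)
    (hlam : ∀ x y : V, min (localEdgeConn G x y) k ≤ localEdgeConn C x y)
    (S : Finset (Sym2 V)) (l : ℕ) (hl : l < k) (hcut : IsCut C S l) :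
    IsCut G S l ∧
      ∀ u v : V, (C.deleteEdges (S : Set (Sym2 V))).Reachable u v ↔
        (G.deleteEdges (S : Set (Sym2 V))).Reachable u v := by
  obtain ⟨hSC, rfl, hcomp⟩ := hcut
  have hreach : ∀ u v : V, (C.deleteEdges (S : Set (Sym2 V))).Reachable u v ↔
      (G.deleteEdges (S : Set (Sym2 V))).Reachable u v := fun u v =>
    ⟨.mono (deleteEdges_mono hCG),
      .of_forall_adj fun _ _ => reachable_deleteEdges_of_adj hCG hlam hl⟩
  refine ⟨⟨hSC.trans (edgeSet_mono hCG), rfl, ?_⟩, hreach⟩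
  calc Nat.card G.ConnectedComponent
      ≤ Nat.card C.ConnectedComponent := ConnectedComponent.card_le_card_of_le hCG
    _ < Nat.card (C.deleteEdges (S : Set (Sym2 V))).ConnectedComponent := hcomp
    _ ≤ Nat.card (G.deleteEdges (S : Set (Sym2 V))).ConnectedComponent :=
      ConnectedComponent.card_le_card_of_reachable_le fun u v => (hreach u v).mpr

/-- If `C` is a spanning subgraph of `G` with `λ(x,y;C) ≥ min{λ(x,y;G), k}` for all
vertices `x, y`, then every `l`-cut `S` of `C` with `l < k` is an `l`-cut of `G`, and
for every such `S` the graphs `C − S` and `G − S` (obtained by deleting the edges of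
`S`) have the same connected components. -/
theorem stmt_5 {V : Type*} [Fintype V] (k : ℕ) (hk : 0 < k)
    (G C : SimpleGraph V) (hCG : C ≤ G)
    (hlam : ∀ x y : V, min (localEdgeConn G x y) k ≤ localEdgeConn C x y)
    (S : Finset (Sym2 V)) (l : ℕ) (hl : l < k) (hcut : IsCut C S l) :
    IsCut G S l ∧
      ∀ u v : V, (C.deleteEdges (S : Set (Sym2 V))).Reachable u v ↔
        (G.deleteEdges (S : Set (Sym2 V))).Reachable u v :=
  stmt_5_general k G C hCG hlam S l hl hcut
end

section
/- Let G be a graph on a finite vertex set V and let C be a spanning subgraph of G such that (i) C contains a spanning forest of G (so every pair of vertices connected in G is connected in C), and (ii) if G is not bipartite then C is not bipartite. Then for every graph H on V, the graph G ∪ H is bipartite if and only if the graph C ∪ H is bipartite; that is, C is a strong certificate of G for bipartiteness. -/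
/-- `F` is a spanning forest of `G`: a subgraph of `G` without any cycles having the
same connected components as `G`. -/
def IsSpanningForest {V : Type*} (G F : SimpleGraph V) : Prop :=
  F ≤ G ∧ F.IsAcyclic ∧ ∀ u v : V, F.Reachable u v ↔ G.Reachable u v

/-- A graph is bipartite iff it is 2-colorable. -/
def IsBipartite {V : Type*} (G : SimpleGraph V) : Prop :=
  G.Colorable 2

lemma sum_const_on_walk {V : Type*} {F A B : SimpleGraph V} (hFA : F ≤ A) (hFB : F ≤ B)
    (f : A.Coloring (Fin 2)) (g : B.Coloring (Fin 2)) {u v : V} (p : F.Walk u v) :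
    f u + g u = f v + g v := by
  induction p with
  | nil => rfl
  | cons h p ih =>
    rename_i a b c
    have hf : f a ≠ f b := f.valid (hFA h)
    have hg : g a ≠ g b := g.valid (hFB h)
    have step : f a + g a = f b + g b := by
      revert hf hg
      generalize f a = x; generalize f b = y; generalize g a = z; generalize g b = w
      revert x y z w; decide
    exact step.trans ih

/-- Let `C` be a spanning subgraph of `G` such that (i) `C` contains a spanning forest
of `G`, and (ii) if `G` is not bipartite then `C` is not bipartite. Then for every
graph `H` on `V`, `G ∪ H` is bipartite iff `C ∪ H` is bipartite; that is, `C` is a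
strong certificate of `G` for bipartiteness. -/
theorem stmt_11 {V : Type*} [Fintype V] (G C : SimpleGraph V) (hCG : C ≤ G)
    (h1 : ∃ F : SimpleGraph V, IsSpanningForest G F ∧ F ≤ C)
    (h2 : ¬ IsBipartite G → ¬ IsBipartite C) :
    ∀ H : SimpleGraph V, IsBipartite (G ⊔ H) ↔ IsBipartite (C ⊔ H) := by
  intro H
  obtain ⟨F, hF, hFC⟩ := h1
  constructor
  · rintro ⟨c⟩
    exact ⟨c.comp (SimpleGraph.Hom.ofLE (sup_le_sup_right hCG H))⟩
  · rintro ⟨f⟩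
    have hCbip : IsBipartite C :=
      ⟨f.comp (SimpleGraph.Hom.ofLE (le_sup_left : C ≤ C ⊔ H))⟩
    have hGbip : IsBipartite G := by
      by_contra hG
      exact h2 hG hCbip
    obtain ⟨g⟩ := hGbip
    have hFCH : F ≤ C ⊔ H := le_trans hFC le_sup_left
    refine ⟨SimpleGraph.Coloring.mk f ?_⟩
    intro u v huv
    cases huv with
    | inl hG =>
      have hreach : F.Reachable u v := (hF.2.2 u v).2 hG.reachable
      obtain ⟨p⟩ := hreach
      have hsum := sum_const_on_walk hFCH hF.1 f g p
      have hg : g u ≠ g v := g.valid hG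
      revert hsum hg
      generalize f u = x; generalize f v = y; generalize g u = z; generalize g v = w
      revert x y z w; decide
    | inr hH =>
      exact f.valid (Or.inr hH)
end
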